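/- arXiv:math/0405037 — 3 statements merged into one kernel-verified Lean document; each statement's English description precedes it below -/
import Mathlib

section
/- Let Γ be a finitely generated free abelian group and ξ : Γ → ℝ an injective homomorphism. Then the Novikov ring Λ_ξ (functions f : Γ → ℝ with {γ : f(γ) ≠ 0, ξ(γ) ≤ R} finite for all R, under convolution) is a field: every nonzero element of Λ_ξ is invertible. -/
open scoped Classical

/-- The underlying set of the Novikov ring `Λ_ξ`. -/
def NovSet {Γ : Type*} [CommGroup Γ] (ξ : Γ → ℝ) : Set (Γ → ℝ) :=
  {f | ∀ R : ℝ, {γ : Γ | f γ ≠ 0 ∧ ξ γ ≤ R}.Finite}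

/-- Convolution product. -/
noncomputable def conv {Γ : Type*} [CommGroup Γ] (f g : Γ → ℝ) : Γ → ℝ :=
  fun γ => ∑ᶠ p ∈ {q : Γ × Γ | q.1 * q.2 = γ}, f p.1 * g p.2

/-- The unit of the Novikov ring. -/
noncomputable def novOne {Γ : Type*} [CommGroup Γ] : Γ → ℝ :=
  fun γ => if γ = 1 then 1 else 0

/-- "Finite slices" predicate on subsets of ℝ. -/
private def FS (s : Set ℝ) : Prop := ∀ R : ℝ, {x ∈ s | x ≤ R}.Finite

private lemma FS.mono {s t : Set ℝ} (h : FS t) (hst : s ⊆ t) : FS s :=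
  fun R => (h R).subset fun x hx => ⟨hst hx.1, hx.2⟩

private lemma FS.isPWO {s : Set ℝ} (h : FS s) : s.IsPWO := by
  refine Set.IsWF.isPWO ?_
  rw [Set.isWF_iff_no_descending_seq]
  intro f hf hmem
  have hsub : Set.range f ⊆ {x ∈ s | x ≤ f 0} := by
    rintro _ ⟨n, rfl⟩
    exact ⟨hmem n, hf.antitone (Nat.zero_le n)⟩
  exact Set.infinite_range_of_injective hf.injective ((h (f 0)).subset hsub)

private lemma FS.insert {s : Set ℝ} (h : FS s) (c : ℝ) : FS (insert c s) := by
  intro R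
  exact ((h R).insert c).subset (by rintro x ⟨hx | hx, hxR⟩ <;> simp_all)

private lemma FS.translate {s : Set ℝ} (h : FS s) (c : ℝ) :
    FS ((fun z => c + z) '' s) := by
  intro R
  apply ((h (R - c)).image (fun z => c + z)).subset
  rintro _ ⟨⟨z, hz, rfl⟩, hR⟩
  have : c + z ≤ R := hR
  exact ⟨z, ⟨hz, by linarith⟩, rfl⟩

private lemma sums_finite (Tf : Finset ℝ) : ∀ n : ℕ,
    {x : ℝ | ∃ l : Multiset ℝ, (∀ y ∈ l, y ∈ Tf) ∧ Multiset.card l ≤ n ∧ l.sum = x}.Finite := by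
  intro n
  induction n with
  | zero =>
    apply Set.Finite.subset (Set.finite_singleton 0)
    rintro x ⟨l, -, hc, rfl⟩
    have : l = 0 := Multiset.card_eq_zero.1 (Nat.le_zero.1 hc)
    simp [this]
  | succ n ih =>
    apply Set.Finite.subset (ih.union (Set.Finite.image2 (· + ·) Tf.finite_toSet ih))
    rintro x ⟨l, hmem, hc, rfl⟩
    rcases Multiset.empty_or_exists_mem l with rfl | ⟨y, hy⟩
    · exact Or.inl ⟨0, by simp, by simp⟩
    · obtain ⟨l', rfl⟩ := Multiset.exists_cons_of_mem hy
      refine Or.inr ⟨y, hmem y (Multiset.mem_cons_self _ _), l'.sum,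
        ⟨l', fun z hz => hmem z (Multiset.mem_cons_of_mem hz), ?_, rfl⟩, by simp⟩
      simp only [Multiset.card_cons, Nat.succ_le_succ_iff] at hc
      exact hc

private lemma FS.closure {s : Set ℝ} (h : FS s) (hpos : ∀ x ∈ s, 0 < x) :
    FS (AddSubmonoid.closure s : Set ℝ) := by
  intro R
  by_cases hT : {x ∈ s | x ≤ R}.Nonempty
  · set Tf : Finset ℝ := (h R).toFinset with hTf
    have hTfne : Tf.Nonempty := by
      obtain ⟨x, hx⟩ := hT; exact ⟨x, (Set.Finite.mem_toFinset _).2 hx⟩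
    set ε : ℝ := Tf.min' hTfne with hε
    have hεmem : ε ∈ {x ∈ s | x ≤ R} := (Set.Finite.mem_toFinset _).1 (Tf.min'_mem hTfne)
    have hεpos : 0 < ε := hpos ε hεmem.1
    set N : ℕ := ⌈R / ε⌉₊ with hN
    apply Set.Finite.subset (sums_finite Tf N)
    rintro x ⟨hx, hxR⟩
    obtain ⟨l, hl, rfl⟩ := AddSubmonoid.exists_multiset_of_mem_closure hx
    have hlT : ∀ y ∈ l, y ∈ Tf := by
      intro y hy
      refine (Set.Finite.mem_toFinset _).2 ⟨hl y hy, ?_⟩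
      calc y ≤ l.sum := Multiset.single_le_sum (fun z hz => (hpos z (hl z hz)).le) y hy
        _ ≤ R := hxR
    have hcard : Multiset.card l ≤ N := by
      have h1 : (Multiset.card l : ℝ) * ε ≤ l.sum := by
        have := Multiset.card_nsmul_le_sum (s := l) (a := ε)
          (fun y hy => Tf.min'_le y (hlT y hy))
        simpa [nsmul_eq_mul, mul_comm] using this
      have h2 : (Multiset.card l : ℝ) ≤ R / ε := by
        rw [le_div_iff₀ hεpos]; linarith
      exact_mod_cast h2.trans (Nat.le_ceil _)
    exact ⟨l, hlT, hcard, rfl⟩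
  · apply Set.Finite.subset (Set.finite_singleton 0)
    rintro x ⟨hx, hxR⟩
    obtain ⟨l, hl, rfl⟩ := AddSubmonoid.exists_multiset_of_mem_closure hx
    rcases Multiset.empty_or_exists_mem l with rfl | ⟨y, hy⟩
    · simp
    · exact absurd ⟨y, hl y hy,
        le_trans (Multiset.single_le_sum (fun z hz => (hpos z (hl z hz)).le) y hy) hxR⟩ hT

private lemma conv_coeff {Γ : Type*} [CommGroup Γ] {ξ : Γ → ℝ}
    (hξ : ∀ a b : Γ, ξ (a * b) = ξ a + ξ b) (hinj : Function.Injective ξ)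
    (f g : Γ → ℝ) (F G : HahnSeries ℝ ℝ)
    (hF : F.coeff = Function.extend ξ f 0) (hG : G.coeff = Function.extend ξ g 0)
    (γ : Γ) : conv f g γ = (F * G).coeff (ξ γ) := by
  have hFc : ∀ a : Γ, F.coeff (ξ a) = f a := fun a => by
    rw [hF, hinj.extend_apply]
  have hGc : ∀ a : Γ, G.coeff (ξ a) = g a := fun a => by
    rw [hG, hinj.extend_apply]
  have hFrange : ∀ x : ℝ, F.coeff x ≠ 0 → ∃ a, ξ a = x := by
    intro x hx
    by_contra hc
    exact hx (by rw [hF, Function.extend_apply' _ _ _ hc]; rfl)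
  have hGrange : ∀ x : ℝ, G.coeff x ≠ 0 → ∃ a, ξ a = x := by
    intro x hx
    by_contra hc
    exact hx (by rw [hG, Function.extend_apply' _ _ _ hc]; rfl)
  set A : Finset (ℝ × ℝ) :=
    Finset.antidiagonal F.isPWO_support G.isPWO_support (ξ γ) with hA
  set A' : Finset (ℝ × ℝ) := A.filter (fun ij => F.coeff ij.1 * G.coeff ij.2 ≠ 0) with hA'
  have hmul : (F * G).coeff (ξ γ) = ∑ ij ∈ A', F.coeff ij.1 * G.coeff ij.2 := by
    rw [HahnSeries.coeff_mul, hA', Finset.sum_filter_ne_zero]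
  set S : Set (Γ × Γ) := {q : Γ × Γ | q.1 * q.2 = γ} with hS
  set h : Γ × Γ → ℝ := fun p => f p.1 * g p.2 with hh
  have hsub : S ∩ Function.support h ⊆ (Prod.map ξ ξ) ⁻¹' ↑A' := by
    rintro ⟨p1, p2⟩ ⟨hp, hsupp⟩
    have hf1 : f p1 ≠ 0 := left_ne_zero_of_mul hsupp
    have hg2 : g p2 ≠ 0 := right_ne_zero_of_mul hsupp
    rw [Set.mem_preimage, Prod.map, Finset.mem_coe, hA', Finset.mem_filter,
      hA, Finset.mem_addAntidiagonal]
    refine ⟨⟨?_, ?_, ?_⟩, ?_⟩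
    · rw [HahnSeries.mem_support, hFc]; exact hf1
    · rw [HahnSeries.mem_support, hGc]; exact hg2
    · rw [← hξ, hp]
    · rw [hFc, hGc]; exact hsupp
  have hinj2 : Function.Injective (Prod.map ξ ξ) := hinj.prodMap hinj
  have hfin : (S ∩ Function.support h).Finite :=
    (A'.finite_toSet.preimage hinj2.injOn).subset hsub
  have hconv : conv f g γ = ∑ p ∈ hfin.toFinset, h p := by
    rw [conv]
    exact finsum_mem_eq_sum _ hfin
  rw [hconv, hmul]
  refine Finset.sum_nbij' (i := fun p => (ξ p.1, ξ p.2))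
    (j := fun ij => (Function.invFun ξ ij.1, Function.invFun ξ ij.2)) ?_ ?_ ?_ ?_ ?_
  · intro p hp
    rw [Set.Finite.mem_toFinset] at hp
    exact Finset.mem_coe.1 (hsub hp)
  · intro ij hij
    rw [hA', Finset.mem_filter, hA, Finset.mem_addAntidiagonal] at hij
    obtain ⟨⟨h1, h2, hsum⟩, hne⟩ := hij
    obtain ⟨a, ha⟩ := hFrange ij.1 h1
    obtain ⟨b, hb⟩ := hGrange ij.2 h2
    have hax : ξ (Function.invFun ξ ij.1) = ij.1 := Function.invFun_eq ⟨a, ha⟩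
    have hbx : ξ (Function.invFun ξ ij.2) = ij.2 := Function.invFun_eq ⟨b, hb⟩
    rw [Set.Finite.mem_toFinset]
    constructor
    · show _ * _ = γ
      apply hinj
      rw [hξ, hax, hbx, hsum]
    · show h _ ≠ 0
      rw [hh]
      dsimp only
      rw [← hFc, ← hGc, hax, hbx]
      exact hne
  · intro p hp
    rw [Set.Finite.mem_toFinset] at hp
    ext <;> simp [Function.leftInverse_invFun hinj _]
  · intro ij hij
    rw [hA', Finset.mem_filter, hA, Finset.mem_addAntidiagonal] at hij
    obtain ⟨⟨h1, h2, hsum⟩, hne⟩ := hij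
    obtain ⟨a, ha⟩ := hFrange ij.1 h1
    obtain ⟨b, hb⟩ := hGrange ij.2 h2
    ext
    · exact Function.invFun_eq ⟨a, ha⟩
    · exact Function.invFun_eq ⟨b, hb⟩
  · intro p hp
    rw [hh]
    dsimp only
    rw [hFc, hGc]

/-- the Novikov ring `Λ_ξ` is a field: every nonzero element has a
convolution inverse in `Λ_ξ`. -/
theorem novikov_isField {Γ : Type*} [CommGroup Γ]
    (hfree : ∃ n : ℕ, Nonempty (Γ ≃* Multiplicative (Fin n → ℤ)))
    (ξ : Γ → ℝ) (hξ : ∀ a b : Γ, ξ (a * b) = ξ a + ξ b) (hinj : Function.Injective ξ) :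
    ∀ f ∈ NovSet ξ, f ≠ (0 : Γ → ℝ) →
      ∃ g ∈ NovSet ξ, conv f g = novOne := by
  intro f hf hf0
  -- basic facts about ξ
  have hξ1 : ξ 1 = 0 := by
    have := hξ 1 1
    rw [mul_one] at this
    linarith
  have hξinv : ∀ a : Γ, ξ a⁻¹ = -ξ a := by
    intro a
    have := hξ a a⁻¹
    rw [mul_inv_cancel, hξ1] at this
    linarith
  -- the Hahn series attached to f
  have hsuppF : Function.support (Function.extend ξ f 0) = ξ '' Function.support f := by
    ext x
    constructor
    · intro hx
      by_cases hr : ∃ a, ξ a = x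
      · obtain ⟨a, rfl⟩ := hr
        rw [Function.mem_support, hinj.extend_apply] at hx
        exact ⟨a, hx, rfl⟩
      · rw [Function.mem_support, Function.extend_apply' _ _ _ hr] at hx
        exact absurd rfl hx
    · rintro ⟨a, ha, rfl⟩
      rw [Function.mem_support, hinj.extend_apply]
      exact ha
  have hFSf : FS (ξ '' Function.support f) := by
    intro R
    apply ((hf R).image ξ).subset
    rintro _ ⟨⟨a, ha, rfl⟩, hR⟩
    exact ⟨a, ⟨ha, hR⟩, rfl⟩
  set F : HahnSeries ℝ ℝ := ⟨Function.extend ξ f 0, by rw [hsuppF]; exact hFSf.isPWO⟩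
    with hFdef
  have hFcoeff : F.coeff = Function.extend ξ f 0 := rfl
  have hFsupp : F.support = ξ '' Function.support f := hsuppF
  have hFsuppFS : FS F.support := by rw [hFsupp]; exact hFSf
  have hF0 : F ≠ 0 := by
    obtain ⟨a, ha⟩ := Function.ne_iff.1 hf0
    intro hc
    apply ha
    have : F.coeff (ξ a) = 0 := by rw [hc]; rfl
    rwa [hFcoeff, hinj.extend_apply] at this
  -- inverse construction following mathlib's Hahn series field structure
  set r : ℝ := (F.leadingCoeff)⁻¹ with hr
  have hrF : r * F.leadingCoeff = 1 :=
    inv_mul_cancel₀ (HahnSeries.leadingCoeff_ne_zero.mpr hF0)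
  set o : ℝ := F.order with ho
  set y : HahnSeries ℝ ℝ := 1 - HahnSeries.single (-o) r * F with hy
  have hy0 : 0 < y.orderTop := HahnSeries.unit_aux F hrF (-o) (neg_add_cancel o)
  set H : HahnSeries ℝ ℝ := (HahnSeries.SummableFamily.powers y).hsum with hH
  set G : HahnSeries ℝ ℝ := HahnSeries.single (-o) r * H with hG
  have hFG : F * G = 1 := by
    have h1 : (1 - y) * H = 1 :=
      HahnSeries.SummableFamily.one_sub_self_mul_hsum_powers hy0
    rw [hy, sub_sub_cancel] at h1
    rw [hG, ← mul_assoc, mul_comm F (HahnSeries.single (-o) r), h1]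
  -- support facts
  have hsingle_mul : ∀ (b : ℝ) (c : ℝ) (x : HahnSeries ℝ ℝ) (a : ℝ),
      (HahnSeries.single b c * x).coeff a ≠ 0 → x.coeff (a - b) ≠ 0 := by
    intro b c x a hne
    have hab : a = (a - b) + b := by ring
    rw [hab, HahnSeries.coeff_single_mul_add] at hne
    exact right_ne_zero_of_mul hne
  have horange : ∃ a : Γ, ξ a = o := by
    have : o ∈ F.support := fun h => hF0 (HahnSeries.coeff_order_eq_zero.mp h)
    rw [hFsupp] at this
    obtain ⟨a, _, ha⟩ := this
    exact ⟨a, ha⟩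
  obtain ⟨w, hw⟩ := horange
  -- support of y
  set K : Set ℝ := insert 0 ((fun z => -o + z) '' F.support) with hK
  have hysuppK : y.support ⊆ K := by
    intro a ha
    rw [HahnSeries.mem_support, hy, HahnSeries.coeff_sub, sub_ne_zero] at ha
    by_cases h1 : (1 : HahnSeries ℝ ℝ).coeff a = 0
    · have h2 : (HahnSeries.single (-o) r * F).coeff a ≠ 0 := fun hc => ha (h1.trans hc.symm)
      have := hsingle_mul (-o) r F a h2
      exact Set.mem_insert_of_mem _ ⟨a - -o, this, by ring⟩
    · have : a = 0 := by
        by_contra hc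
        exact h1 (by rw [HahnSeries.coeff_one, if_neg hc])
      rw [this, hK]
      exact Set.mem_insert 0 _
  have hyFS : FS y.support := ((hFsuppFS.translate (-o)).insert 0).mono hysuppK
  have hypos : ∀ a ∈ y.support, 0 < a := by
    intro a ha
    have h1 : y.orderTop ≤ (a : WithTop ℝ) := HahnSeries.orderTop_le_of_coeff_ne_zero ha
    have h2 : ((0 : ℝ) : WithTop ℝ) < (a : WithTop ℝ) := lt_of_lt_of_le hy0 h1
    exact_mod_cast h2
  set C : Set ℝ := (AddSubmonoid.closure y.support : Set ℝ) with hC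
  have hCFS : FS C := hyFS.closure hypos
  have hpow : ∀ n : ℕ, (y ^ n).support ⊆ C := by
    intro n
    induction n with
    | zero =>
      intro a ha
      rw [pow_zero, HahnSeries.support_one, Set.mem_singleton_iff] at ha
      exact ha ▸ AddSubmonoid.zero_mem _
    | succ n ih =>
      intro a ha
      rw [pow_succ] at ha
      obtain ⟨i, hi, j, hj, rfl⟩ := HahnSeries.support_mul_subset ha
      exact AddSubmonoid.add_mem _ (ih hi) (AddSubmonoid.subset_closure hj)
  have hHsupp : H.support ⊆ C := by
    refine Set.Subset.trans HahnSeries.SummableFamily.support_hsum_subset ?_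
    refine Set.iUnion_subset fun n => ?_
    have hn : (HahnSeries.SummableFamily.powers y) n = y ^ n :=
      HahnSeries.SummableFamily.powers_of_orderTop_pos hy0 n
    rw [hn]
    exact hpow n
  have hGsupp : G.support ⊆ (fun z => -o + z) '' C := by
    intro a ha
    have := hsingle_mul (-o) r H a ha
    exact ⟨a - -o, hHsupp this, by ring⟩
  have hGFS : FS G.support := (hCFS.translate (-o)).mono hGsupp
  have hrange_sub : y.support ⊆ Set.range ξ := by
    intro a ha
    rcases Set.mem_insert_iff.1 (hysuppK ha) with rfl | ⟨z, hz, rfl⟩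
    · exact ⟨1, hξ1⟩
    · rw [hFsupp] at hz
      obtain ⟨b, _, rfl⟩ := hz
      exact ⟨w⁻¹ * b, by rw [hξ, hξinv, hw]⟩
  have hCrange : C ⊆ Set.range ξ := by
    intro x hx
    induction hx using AddSubmonoid.closure_induction with
    | mem z hz => exact hrange_sub hz
    | zero => exact ⟨1, hξ1⟩
    | add a b _ _ iha ihb =>
      obtain ⟨c, rfl⟩ := iha
      obtain ⟨d, rfl⟩ := ihb
      exact ⟨c * d, hξ c d⟩
  have hGrange : G.support ⊆ Set.range ξ := by
    intro a ha
    obtain ⟨z, hz, rfl⟩ := hGsupp ha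
    obtain ⟨c, rfl⟩ := hCrange hz
    exact ⟨w⁻¹ * c, by rw [hξ, hξinv, hw]⟩
  set g : Γ → ℝ := fun γ => G.coeff (ξ γ) with hg
  have hgNov : g ∈ NovSet ξ := by
    intro R
    have hset : {γ : Γ | g γ ≠ 0 ∧ ξ γ ≤ R} = ξ ⁻¹' {x ∈ G.support | x ≤ R} := by
      ext γ
      simp only [Set.mem_setOf_eq, Set.mem_preimage, HahnSeries.mem_support, hg]
    rw [hset]
    exact (hGFS R).preimage hinj.injOn
  have hGcoeff : G.coeff = Function.extend ξ g 0 := by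
    funext x
    by_cases hr2 : ∃ a, ξ a = x
    · obtain ⟨a, rfl⟩ := hr2
      rw [hinj.extend_apply]
    · have h0 : G.coeff x = 0 := by
        by_contra hc
        exact hr2 (hGrange hc)
      rw [Function.extend_apply' _ _ _ hr2, h0]
      rfl
  refine ⟨g, hgNov, ?_⟩
  funext γ
  rw [conv_coeff hξ hinj f g F G hFcoeff hGcoeff γ, hFG, HahnSeries.coeff_one]
  by_cases hγ : γ = 1
  · subst hγ
    rw [if_pos hξ1]
    simp [novOne]
  · have hne : ξ γ ≠ 0 := fun hc => hγ (hinj (by rw [hc, hξ1]))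
    rw [if_neg hne]
    simp [novOne, hγ]
end

section
/- Let Γ be a finitely generated free abelian group, ξ : Γ → ℝ injective, and Λ_ξ the associated Novikov ring. For f ∈ Λ_ξ with f supported on {γ : ξ(γ) > 0}, the element 1 - f is invertible in Λ_ξ, with inverse given by the convergent (in the sense of pointwise finitely-supported sums on each level set) geometric series Σ_{n≥0} f^{*n}. -/
open scoped Classical

/-- `n`-fold convolution power, with `f^{*0}` the unit. -/
noncomputable def convPow {Γ : Type*} [CommGroup Γ] (f : Γ → ℝ) : ℕ → Γ → ℝ
  | 0 => novOne
  | n + 1 => conv f (convPow f n)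

section Aux

open Pointwise

variable {Γ : Type*} [CommGroup Γ] {ξ : Γ → ℝ}

/-- Reindexing of the convolution sum by the first factor. -/
lemma conv_eq_finsum (f g : Γ → ℝ) (γ : Γ) :
    conv f g γ = ∑ᶠ a : Γ, f a * g (a⁻¹ * γ) := by
  rw [conv, ← finsum_mem_univ (fun a => f a * g (a⁻¹ * γ))]
  refine (finsum_mem_eq_of_bijOn (fun a : Γ => (a, a⁻¹ * γ)) ⟨?_, ?_, ?_⟩ ?_).symm
  · intro a _
    simp [Set.mem_setOf_eq]
  · intro a _ b _ h
    exact congrArg Prod.fst h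
  · rintro ⟨x, y⟩ hq
    refine ⟨x, Set.mem_univ _, ?_⟩
    simp only [Set.mem_setOf_eq] at hq
    simp [← hq]
  · intro a _
    rfl

lemma xi_one (hξ : ∀ a b : Γ, ξ (a * b) = ξ a + ξ b) : ξ 1 = 0 := by
  have := hξ 1 1
  simp at this
  linarith

lemma xi_list_prod (hξ : ∀ a b : Γ, ξ (a * b) = ξ a + ξ b) :
    ∀ l : List Γ, ξ l.prod = (l.map ξ).sum := by
  intro l
  induction l with
  | nil => simpa using xi_one hξ
  | cons x l ih => simp [hξ, ih]

lemma exists_of_conv_ne_zero {f g : Γ → ℝ} {γ : Γ} (h : conv f g γ ≠ 0) :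
    ∃ a : Γ, f a ≠ 0 ∧ g (a⁻¹ * γ) ≠ 0 := by
  rw [conv_eq_finsum] at h
  by_contra hc
  push_neg at hc
  refine h (finsum_eq_zero_of_forall_eq_zero fun a => ?_)
  by_cases hfa : f a = 0
  · simp [hfa]
  · simp [hc a hfa]

lemma exists_list_of_convPow_ne_zero {f : Γ → ℝ} :
    ∀ (n : ℕ) (γ : Γ), convPow f n γ ≠ 0 →
      ∃ l : List Γ, l.length = n ∧ (∀ x ∈ l, f x ≠ 0) ∧ l.prod = γ := by
  intro n
  induction n with
  | zero =>
    intro γ h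
    have hγ : γ = 1 := by
      by_contra hne
      exact h (by simp [convPow, novOne, hne])
    exact ⟨[], rfl, by simp, by simp [hγ]⟩
  | succ n ih =>
    intro γ h
    obtain ⟨a, hfa, hg⟩ := exists_of_conv_ne_zero h
    obtain ⟨l, hlen, hmem, hprod⟩ := ih _ hg
    refine ⟨a :: l, by simp [hlen], ?_, by simp [hprod]⟩
    intro x hx
    rcases List.mem_cons.1 hx with rfl | hx
    · exact hfa
    · exact hmem x hx

/-- Every factor of a list of support elements is itself small. -/
lemma list_mem_T (hξ : ∀ a b : Γ, ξ (a * b) = ξ a + ξ b)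
    {f : Γ → ℝ} (hsupp : ∀ γ : Γ, f γ ≠ 0 → 0 < ξ γ)
    {l : List Γ} (hl : ∀ x ∈ l, f x ≠ 0) {R : ℝ} (hR : ξ l.prod ≤ R) :
    ∀ x ∈ l, f x ≠ 0 ∧ ξ x ≤ R := by
  intro x hx
  refine ⟨hl x hx, ?_⟩
  have h1 : ξ x ≤ (l.map ξ).sum := by
    refine List.single_le_sum (fun y hy => ?_) _ (List.mem_map_of_mem (f := ξ) hx)
    obtain ⟨z, hz, rfl⟩ := List.mem_map.1 hy
    exact (hsupp z (hl z hz)).le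
  rw [xi_list_prod hξ] at hR
  linarith

lemma xi_nonneg_of_convPow_ne_zero (hξ : ∀ a b : Γ, ξ (a * b) = ξ a + ξ b)
    {f : Γ → ℝ} (hsupp : ∀ γ : Γ, f γ ≠ 0 → 0 < ξ γ)
    {n : ℕ} {γ : Γ} (h : convPow f n γ ≠ 0) : 0 ≤ ξ γ := by
  obtain ⟨l, _, hmem, rfl⟩ := exists_list_of_convPow_ne_zero n γ h
  rw [xi_list_prod hξ]
  refine List.sum_nonneg fun y hy => ?_
  obtain ⟨z, hz, rfl⟩ := List.mem_map.1 hy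
  exact (hsupp z (hmem z hz)).le

/-- Uniform vanishing bound: on a level `ξ γ ≤ R`, high convolution powers vanish. -/
lemma convPow_bound (hξ : ∀ a b : Γ, ξ (a * b) = ξ a + ξ b)
    {f : Γ → ℝ} (hf : f ∈ NovSet ξ) (hsupp : ∀ γ : Γ, f γ ≠ 0 → 0 < ξ γ) (R : ℝ) :
    ∃ N : ℕ, ∀ (n : ℕ) (γ : Γ), ξ γ ≤ R → N ≤ n → convPow f n γ = 0 := by
  have hT : {γ : Γ | f γ ≠ 0 ∧ ξ γ ≤ R}.Finite := hf R
  by_cases hne : {γ : Γ | f γ ≠ 0 ∧ ξ γ ≤ R}.Nonempty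
  · have hFne : (hT.toFinset.image ξ).Nonempty := by
      obtain ⟨x, hx⟩ := hne
      exact ⟨ξ x, Finset.mem_image_of_mem ξ (hT.mem_toFinset.2 hx)⟩
    set ε := (hT.toFinset.image ξ).min' hFne with hε
    have hεpos : 0 < ε := by
      obtain ⟨x, hx, hxε⟩ := Finset.mem_image.1 ((hT.toFinset.image ξ).min'_mem hFne)
      rw [hε, ← hxε]
      exact hsupp x (hT.mem_toFinset.1 hx).1
    obtain ⟨N, hN⟩ := exists_nat_gt (R / ε)
    refine ⟨N, fun n γ hγR hn => ?_⟩
    by_contra h0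
    obtain ⟨l, hlen, hmem, hprod⟩ := exists_list_of_convPow_ne_zero n γ h0
    have hmemT : ∀ x ∈ l, f x ≠ 0 ∧ ξ x ≤ R :=
      list_mem_T hξ hsupp hmem (by rw [hprod]; exact hγR)
    have hbound : (n : ℝ) • ε ≤ (l.map ξ).sum := by
      have := List.card_nsmul_le_sum (l.map ξ) ε (fun x hx => ?_)
      · simpa [hlen, nsmul_eq_mul] using this
      · obtain ⟨z, hz, rfl⟩ := List.mem_map.1 hx
        exact (hT.toFinset.image ξ).min'_le _
          (Finset.mem_image_of_mem ξ (hT.mem_toFinset.2 (hmemT z hz)))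
    rw [← xi_list_prod hξ, hprod] at hbound
    have h1 : R / ε < (n : ℝ) := lt_of_lt_of_le hN (by exact_mod_cast hn)
    have h2 : R < (n : ℝ) * ε := (div_lt_iff₀ hεpos).1 h1
    rw [smul_eq_mul] at hbound
    linarith
  · refine ⟨1, fun n γ hγR hn => ?_⟩
    by_contra h0
    obtain ⟨l, hlen, hmem, hprod⟩ := exists_list_of_convPow_ne_zero n γ h0
    have hl : l ≠ [] := by
      rintro rfl
      simp at hlen
      omega
    obtain ⟨x, hx⟩ := List.exists_mem_of_ne_nil l hl
    exact hne ⟨x, list_mem_T hξ hsupp hmem (by rw [hprod]; exact hγR) x hx⟩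

/-- Products of length-`n` lists with entries in a finite set form a finite set. -/
lemma finite_list_prods {s : Set Γ} (hs : s.Finite) :
    ∀ n : ℕ, {γ : Γ | ∃ l : List Γ, l.length = n ∧ (∀ x ∈ l, x ∈ s) ∧ l.prod = γ}.Finite := by
  intro n
  induction n with
  | zero =>
    refine Set.Finite.subset (Set.finite_singleton 1) ?_
    rintro γ ⟨l, hlen, _, rfl⟩
    rw [List.length_eq_zero_iff] at hlen
    simp [hlen]
  | succ n ih =>
    refine Set.Finite.subset (hs.mul ih) ?_
    rintro γ ⟨l, hlen, hmem, rfl⟩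
    match l with
    | x :: l' =>
      rw [List.prod_cons]
      exact Set.mul_mem_mul (hmem x (by simp))
        ⟨l', by simpa using hlen, fun y hy => hmem y (by simp [hy]), rfl⟩

/-- Uniform finiteness of the supports of all convolution powers on a level set. -/
lemma uniform_finite (hξ : ∀ a b : Γ, ξ (a * b) = ξ a + ξ b)
    {f : Γ → ℝ} (hf : f ∈ NovSet ξ) (hsupp : ∀ γ : Γ, f γ ≠ 0 → 0 < ξ γ) (R : ℝ) :
    {γ : Γ | (∃ n : ℕ, convPow f n γ ≠ 0) ∧ ξ γ ≤ R}.Finite := by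
  obtain ⟨N, hN⟩ := convPow_bound hξ hf hsupp R
  have hfin : ∀ n : ℕ,
      {γ : Γ | ∃ l : List Γ, l.length = n ∧ (∀ x ∈ l, x ∈ {γ : Γ | f γ ≠ 0 ∧ ξ γ ≤ R}) ∧
        l.prod = γ}.Finite := finite_list_prods (hf R)
  refine Set.Finite.subset (Set.Finite.biUnion (Set.finite_Iio N) (fun n _ => hfin n)) ?_
  rintro γ ⟨⟨n, hn⟩, hγR⟩
  have hnN : n < N := by
    by_contra h
    exact hn (hN n γ hγR (by omega))
  obtain ⟨l, hlen, hmem, hprod⟩ := exists_list_of_convPow_ne_zero n γ hn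
  exact Set.mem_biUnion hnN
    ⟨l, hlen, fun x hx => list_mem_T hξ hsupp hmem (by rw [hprod]; exact hγR) x hx, hprod⟩

end Aux

/-- if `f ∈ Λ_ξ` is supported on `{γ | ξ γ > 0}`, then the geometric series
`Σ_{n ≥ 0} f^{*n}` is pointwise a finite sum, belongs to `Λ_ξ`, and is a convolution
inverse of `1 - f`. -/
theorem novikov_geometric_series_inverse {Γ : Type*} [CommGroup Γ]
    (hfree : ∃ n : ℕ, Nonempty (Γ ≃* Multiplicative (Fin n → ℤ)))
    (ξ : Γ → ℝ) (hξ : ∀ a b : Γ, ξ (a * b) = ξ a + ξ b) (hinj : Function.Injective ξ)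
    (f : Γ → ℝ) (hf : f ∈ NovSet ξ) (hsupp : ∀ γ : Γ, f γ ≠ 0 → 0 < ξ γ) :
    (∀ γ : Γ, {n : ℕ | convPow f n γ ≠ 0}.Finite) ∧
    (fun γ => ∑ᶠ n : ℕ, convPow f n γ) ∈ NovSet ξ ∧
    conv (novOne - f) (fun γ => ∑ᶠ n : ℕ, convPow f n γ) = novOne := by
  set g : Γ → ℝ := fun γ => ∑ᶠ n : ℕ, convPow f n γ with hg
  -- Part 1
  have part1 : ∀ γ : Γ, {n : ℕ | convPow f n γ ≠ 0}.Finite := by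
    intro γ
    obtain ⟨N, hN⟩ := convPow_bound hξ hf hsupp (ξ γ)
    refine Set.Finite.subset (Set.finite_Iio N) ?_
    intro n hn
    by_contra h
    exact hn (hN n γ le_rfl (by simpa using h))
  have hgne : ∀ γ : Γ, g γ ≠ 0 → ∃ n : ℕ, convPow f n γ ≠ 0 := by
    intro γ h
    by_contra hc
    push_neg at hc
    exact h (finsum_eq_zero_of_forall_eq_zero hc)
  -- Part 2
  have part2 : g ∈ NovSet ξ := by
    intro R
    refine Set.Finite.subset (uniform_finite hξ hf hsupp R) ?_
    rintro γ ⟨hγ, hγR⟩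
    exact ⟨hgne γ hγ, hγR⟩
  refine ⟨part1, part2, ?_⟩
  -- Part 3
  have hg0 : ∀ b : Γ, g b ≠ 0 → 0 ≤ ξ b := by
    intro b hb
    obtain ⟨n, hn⟩ := hgne b hb
    exact xi_nonneg_of_convPow_ne_zero hξ hsupp hn
  funext γ
  obtain ⟨N, hN⟩ := convPow_bound hξ hf hsupp (ξ γ)
  have hTfin := hf (ξ γ)
  set A : Finset Γ := hTfin.toFinset with hA
  -- support of a ↦ f a * h (a⁻¹ * γ) lies in A whenever h is supported on ξ ≥ 0
  have hsubA : ∀ h : Γ → ℝ, (∀ b : Γ, h b ≠ 0 → 0 ≤ ξ b) →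
      (Function.support fun a => f a * h (a⁻¹ * γ)) ⊆ (A : Set Γ) := by
    intro h h0 a ha
    rw [Function.mem_support] at ha
    have hfa : f a ≠ 0 := fun hz => ha (by rw [hz, zero_mul])
    have hhb : h (a⁻¹ * γ) ≠ 0 := fun hz => ha (by rw [hz, mul_zero])
    have hxia : ξ a ≤ ξ γ := by
      have h1 : ξ (a * (a⁻¹ * γ)) = ξ a + ξ (a⁻¹ * γ) := hξ a (a⁻¹ * γ)
      rw [mul_inv_cancel_left] at h1
      have := h0 _ hhb
      linarith
    simp only [hA, Set.Finite.coe_toFinset, Set.mem_setOf_eq]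
    exact ⟨hfa, hxia⟩
  have hxiainv : ∀ a : Γ, f a ≠ 0 → ξ (a⁻¹ * γ) ≤ ξ γ := by
    intro a hfa
    have h1 : ξ (a * (a⁻¹ * γ)) = ξ a + ξ (a⁻¹ * γ) := hξ a (a⁻¹ * γ)
    rw [mul_inv_cancel_left] at h1
    have := hsupp a hfa
    linarith
  -- second sum
  have key : (∑ᶠ a : Γ, f a * g (a⁻¹ * γ)) = g γ - novOne γ := by
    have step1 : (∑ᶠ a : Γ, f a * g (a⁻¹ * γ)) = ∑ a ∈ A, f a * g (a⁻¹ * γ) :=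
      finsum_eq_finset_sum_of_support_subset _ (hsubA g hg0)
    have step2 : ∀ a ∈ A, g (a⁻¹ * γ) = ∑ n ∈ Finset.range N, convPow f n (a⁻¹ * γ) := by
      intro a haA
      have hfa : f a ≠ 0 := (hTfin.mem_toFinset.1 haA).1
      refine finsum_eq_finset_sum_of_support_subset _ ?_
      intro n hn
      rw [Function.mem_support] at hn
      simp only [Finset.coe_range, Set.mem_Iio]
      by_contra h
      exact hn (hN n _ (hxiainv a hfa) (by omega))
    have step3 : ∀ n : ℕ, (∑ a ∈ A, f a * convPow f n (a⁻¹ * γ)) = convPow f (n + 1) γ := by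
      intro n
      rw [show convPow f (n + 1) = conv f (convPow f n) from rfl, conv_eq_finsum]
      exact (finsum_eq_finset_sum_of_support_subset _
        (hsubA (convPow f n) (fun b hb => xi_nonneg_of_convPow_ne_zero hξ hsupp hb))).symm
    have step4 : g γ = ∑ n ∈ Finset.range (N + 1), convPow f n γ := by
      refine finsum_eq_finset_sum_of_support_subset _ ?_
      intro n hn
      rw [Function.mem_support] at hn
      simp only [Finset.coe_range, Set.mem_Iio]
      by_contra h
      exact hn (hN n γ le_rfl (by omega))
    calc (∑ᶠ a : Γ, f a * g (a⁻¹ * γ))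
        = ∑ a ∈ A, f a * ∑ n ∈ Finset.range N, convPow f n (a⁻¹ * γ) := by
          rw [step1]; exact Finset.sum_congr rfl fun a ha => by rw [step2 a ha]
      _ = ∑ a ∈ A, ∑ n ∈ Finset.range N, f a * convPow f n (a⁻¹ * γ) := by
          exact Finset.sum_congr rfl fun a _ => Finset.mul_sum _ _ _
      _ = ∑ n ∈ Finset.range N, ∑ a ∈ A, f a * convPow f n (a⁻¹ * γ) := Finset.sum_comm
      _ = ∑ n ∈ Finset.range N, convPow f (n + 1) γ :=
          Finset.sum_congr rfl fun n _ => step3 n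
      _ = g γ - novOne γ := by
          rw [step4, Finset.sum_range_succ']
          simp [convPow]
  -- first sum
  have hone : (∑ᶠ a : Γ, novOne a * g (a⁻¹ * γ)) = g γ := by
    rw [finsum_eq_single _ (1 : Γ) (fun a ha => by simp [novOne, ha])]
    simp [novOne]
  have hsupp1 : (Function.support fun a : Γ => novOne a * g (a⁻¹ * γ)).Finite := by
    refine Set.Finite.subset (Set.finite_singleton 1) ?_
    intro a ha
    rw [Function.mem_support] at ha
    have ha1 : a = 1 := by
      by_contra h
      exact ha (by simp [novOne, h])
    simp [ha1]
  have hsupp2 : (Function.support fun a : Γ => f a * g (a⁻¹ * γ)).Finite :=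
    Set.Finite.subset A.finite_toSet (hsubA g hg0)
  show conv (novOne - f) g γ = novOne γ
  rw [conv_eq_finsum (novOne - f) g γ]
  have heq : (fun a : Γ => (novOne - f : Γ → ℝ) a * g (a⁻¹ * γ))
      = fun a : Γ => novOne a * g (a⁻¹ * γ) - f a * g (a⁻¹ * γ) := by
    funext a
    rw [Pi.sub_apply, sub_mul]
  rw [heq, finsum_sub_distrib hsupp1 hsupp2, hone, key]
  ring
end

section
/- Let Γ be a finitely generated free abelian group, ξ : Γ → ℝ injective, Λ_ξ the Novikov ring, and for ρ ∈ [0,∞) let Λ_{ξ,ρ} ⊂ Λ_ξ be the set of f such that Σ_{γ∈Γ} |f(γ)| e^{-t ξ(γ)} converges for all t > ρ. Then Λ_{ξ,ρ} is a subring of Λ_ξ, and for each t > ρ the map ev_t : Λ_{ξ,ρ} → ℝ defined by ev_t(f) = Σ_{γ∈Γ} f(γ) e^{-t ξ(γ)} is a unit-preserving ring homomorphism. -/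
open scoped Classical

/-- The subring `Λ_{ξ,ρ}` of elements whose Dirichlet series converge absolutely for
all `t > ρ`. -/
def NovSetRho {Γ : Type*} [CommGroup Γ] (ξ : Γ → ℝ) (ρ : ℝ) : Set (Γ → ℝ) :=
  {f | f ∈ NovSet ξ ∧ ∀ t : ℝ, ρ < t → Summable (fun γ : Γ => |f γ| * Real.exp (-(t * ξ γ)))}

/-- Evaluation (Laplace transform at `t`): `ev_t f = Σ_γ f γ e^{-t ξ γ}`. -/
noncomputable def novEv {Γ : Type*} [CommGroup Γ] (ξ : Γ → ℝ) (t : ℝ) (f : Γ → ℝ) : ℝ :=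
  ∑' γ : Γ, f γ * Real.exp (-(t * ξ γ))

section Aux
variable {Γ : Type*} [CommGroup Γ] {ξ : Γ → ℝ}

/-- shear equiv -/
def mulShear (Γ : Type*) [CommGroup Γ] : Γ × Γ ≃ Γ × Γ where
  toFun p := (p.1 * p.2, p.2)
  invFun p := (p.1 * p.2⁻¹, p.2)
  left_inv p := by simp
  right_inv p := by simp

theorem nov_bddBelow {f : Γ → ℝ} (hf : f ∈ NovSet ξ) :
    ∃ m : ℝ, ∀ a : Γ, f a ≠ 0 → m ≤ ξ a := by
  have hS := hf 0
  obtain ⟨m0, hm0⟩ := (hS.image ξ).bddBelow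
  refine ⟨min m0 0, fun a ha => ?_⟩
  by_cases h : ξ a ≤ 0
  · exact le_trans (min_le_left _ _) (hm0 ⟨a, ⟨ha, h⟩, rfl⟩)
  · exact le_trans (min_le_right _ _) (le_of_not_ge h)

theorem nov_fiber_finite (hξ : ∀ a b : Γ, ξ (a * b) = ξ a + ξ b)
    {f g : Γ → ℝ} (hf : f ∈ NovSet ξ) (hg : g ∈ NovSet ξ) (γ : Γ) :
    {q : Γ × Γ | q.1 * q.2 = γ ∧ f q.1 ≠ 0 ∧ g q.2 ≠ 0}.Finite := by
  obtain ⟨m, hm⟩ := nov_bddBelow (ξ := ξ) hg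
  have hsub : {q : Γ × Γ | q.1 * q.2 = γ ∧ f q.1 ≠ 0 ∧ g q.2 ≠ 0} ⊆
      (fun a : Γ => (a, a⁻¹ * γ)) '' {a : Γ | f a ≠ 0 ∧ ξ a ≤ ξ γ - m} := by
    rintro ⟨a, b⟩ ⟨hab, hfa, hgb⟩
    refine ⟨a, ⟨hfa, ?_⟩, ?_⟩
    · have h1 : ξ a + ξ b = ξ γ := by rw [← hξ, hab]
      have := hm b hgb; linarith
    · have hb : a⁻¹ * γ = b := by rw [← hab]; group
      simp [hb]
  exact Set.Finite.subset ((hf (ξ γ - m)).image _) hsub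

theorem conv_eq_sum (hξ : ∀ a b : Γ, ξ (a * b) = ξ a + ξ b)
    {f g : Γ → ℝ} (hf : f ∈ NovSet ξ) (hg : g ∈ NovSet ξ) (γ : Γ) :
    conv f g γ = ∑ p ∈ (nov_fiber_finite hξ hf hg γ).toFinset, f p.1 * g p.2 := by
  have hfin : ({q : Γ × Γ | q.1 * q.2 = γ} ∩
      Function.support (fun p : Γ × Γ => f p.1 * g p.2)).Finite := by
    refine Set.Finite.subset (nov_fiber_finite hξ hf hg γ) ?_
    rintro ⟨a, b⟩ ⟨hab, hsupp⟩
    have := mul_ne_zero_iff.mp hsupp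
    exact ⟨hab, this.1, this.2⟩
  rw [conv, finsum_mem_eq_sum _ hfin]
  apply Finset.sum_subset
  · intro p hp
    simp only [Set.Finite.mem_toFinset, Set.mem_inter_iff, Set.mem_setOf_eq,
      Function.mem_support] at hp ⊢
    exact ⟨hp.1, (mul_ne_zero_iff.mp hp.2).1, (mul_ne_zero_iff.mp hp.2).2⟩
  · intro p hp hnp
    simp only [Set.Finite.mem_toFinset, Set.mem_inter_iff, Set.mem_setOf_eq,
      Function.mem_support, not_and, not_not] at hp hnp
    exact hnp hp.1


theorem nov_xi_split (hξ : ∀ a b : Γ, ξ (a * b) = ξ a + ξ b) (γ b : Γ) :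
    ξ (γ * b⁻¹) + ξ b = ξ γ := by
  rw [← hξ]; congr 1; group

theorem nov_exp_factor (hξ : ∀ a b : Γ, ξ (a * b) = ξ a + ξ b) (t : ℝ) (γ b : Γ) :
    Real.exp (-(t * ξ γ)) = Real.exp (-(t * ξ (γ * b⁻¹))) * Real.exp (-(t * ξ b)) := by
  rw [← Real.exp_add]
  congr 1
  rw [← nov_xi_split hξ γ b]
  ring

/-- the inner (fiber) sum equals `conv`. -/
theorem nov_inner_tsum (hξ : ∀ a b : Γ, ξ (a * b) = ξ a + ξ b)
    {f g : Γ → ℝ} (hf : f ∈ NovSet ξ) (hg : g ∈ NovSet ξ) (γ : Γ) :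
    ∑' b : Γ, f (γ * b⁻¹) * g b = conv f g γ := by
  classical
  set T := (nov_fiber_finite hξ hf hg γ).toFinset with hT
  have hinjon : Set.InjOn Prod.snd (T : Set (Γ × Γ)) := by
    intro p hp q hq hpq
    simp only [hT, Set.Finite.coe_toFinset, Set.mem_setOf_eq] at hp hq
    have hp1 : p.1 = γ * p.2⁻¹ := by
      have := hp.1; rw [← this]; group
    have hq1 : q.1 = γ * q.2⁻¹ := by
      have := hq.1; rw [← this]; group
    exact Prod.ext (by rw [hp1, hq1, hpq]) hpq
  have hzero : ∀ b ∉ T.image Prod.snd, f (γ * b⁻¹) * g b = 0 := by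
    intro b hb
    by_contra h
    apply hb
    have h1 : f (γ * b⁻¹) ≠ 0 := (mul_ne_zero_iff.mp h).1
    have h2 : g b ≠ 0 := (mul_ne_zero_iff.mp h).2
    refine Finset.mem_image.mpr ⟨(γ * b⁻¹, b), ?_, rfl⟩
    simp only [hT, Set.Finite.mem_toFinset, Set.mem_setOf_eq]
    exact ⟨by group, h1, h2⟩
  rw [tsum_eq_sum hzero, Finset.sum_image (fun p hp q hq h => hinjon hp hq h)]
  rw [conv_eq_sum hξ hf hg γ, ← hT]
  apply Finset.sum_congr rfl
  intro p hp
  simp only [hT, Set.Finite.mem_toFinset, Set.mem_setOf_eq] at hp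
  have hp1 : γ * p.2⁻¹ = p.1 := by
    rw [← hp.1]; group
  rw [hp1]

theorem nov_conv_mem_novset (hξ : ∀ a b : Γ, ξ (a * b) = ξ a + ξ b)
    {f g : Γ → ℝ} (hf : f ∈ NovSet ξ) (hg : g ∈ NovSet ξ) :
    conv f g ∈ NovSet ξ := by
  obtain ⟨mf, hmf⟩ := nov_bddBelow (ξ := ξ) hf
  obtain ⟨mg, hmg⟩ := nov_bddBelow (ξ := ξ) hg
  intro R
  refine Set.Finite.subset (Finset.finite_toSet _) (s := (((hf (R - mg)).toFinset ×ˢ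
      (hg (R - mf)).toFinset).image (fun p : Γ × Γ => p.1 * p.2) : Finset Γ)) ?_
  intro γ hγ
  obtain ⟨hne, hR⟩ := hγ
  rw [conv_eq_sum hξ hf hg γ] at hne
  obtain ⟨p, hp, hpne⟩ := Finset.exists_ne_zero_of_sum_ne_zero hne
  simp only [Set.Finite.mem_toFinset, Set.mem_setOf_eq] at hp
  obtain ⟨hpγ, hf1, hg2⟩ := hp
  have hξγ : ξ p.1 + ξ p.2 = ξ γ := by rw [← hξ, hpγ]
  have h1 : ξ p.1 ≤ R - mg := by have := hmg p.2 hg2; linarith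
  have h2 : ξ p.2 ≤ R - mf := by have := hmf p.1 hf1; linarith
  refine Finset.mem_coe.mpr (Finset.mem_image.mpr ⟨p, ?_, hpγ⟩)
  rw [Finset.mem_product]
  constructor <;> simp only [Set.Finite.mem_toFinset, Set.mem_setOf_eq]
  · exact ⟨hf1, h1⟩
  · exact ⟨hg2, h2⟩

set_option maxHeartbeats 1000000 in
theorem nov_mul_summable_and_ev (hξ : ∀ a b : Γ, ξ (a * b) = ξ a + ξ b)
    {f g : Γ → ℝ} (hfN : f ∈ NovSet ξ) (hgN : g ∈ NovSet ξ) {t : ℝ}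
    (hw : Summable fun a : Γ => |f a| * Real.exp (-(t * ξ a)))
    (hv : Summable fun a : Γ => |g a| * Real.exp (-(t * ξ a))) :
    Summable (fun γ : Γ => |conv f g γ| * Real.exp (-(t * ξ γ))) ∧
    (∑' γ : Γ, conv f g γ * Real.exp (-(t * ξ γ))) =
      (∑' γ : Γ, f γ * Real.exp (-(t * ξ γ))) * (∑' γ : Γ, g γ * Real.exp (-(t * ξ γ))) := by
  classical
  set w : Γ → ℝ := fun a => |f a| * Real.exp (-(t * ξ a)) with hwdef
  set v : Γ → ℝ := fun a => |g a| * Real.exp (-(t * ξ a)) with hvdef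
  have wnn : ∀ a, 0 ≤ w a := fun a => mul_nonneg (abs_nonneg _) (Real.exp_pos _).le
  have vnn : ∀ a, 0 ≤ v a := fun a => mul_nonneg (abs_nonneg _) (Real.exp_pos _).le
  have H : Summable fun p : Γ × Γ => w p.1 * v p.2 := hw.mul_of_nonneg hv wnn vnn
  have HG : Summable fun p : Γ × Γ => w (p.1 * p.2⁻¹) * v p.2 :=
    ((mulShear Γ).symm.summable_iff (f := fun p : Γ × Γ => w p.1 * v p.2)).mpr H
  have Gnn : ∀ p : Γ × Γ, 0 ≤ w (p.1 * p.2⁻¹) * v p.2 := fun p => mul_nonneg (wnn _) (vnn _)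
  have hfiber : ∀ γ : Γ, Summable fun b : Γ => w (γ * b⁻¹) * v b := fun γ => HG.prod_factor γ
  have hmarg : Summable fun γ : Γ => ∑' b : Γ, w (γ * b⁻¹) * v b :=
    ((summable_prod_of_nonneg Gnn).mp HG).2
  have habs : ∀ γ b : Γ, |f (γ * b⁻¹) * g b * Real.exp (-(t * ξ γ))| = w (γ * b⁻¹) * v b := by
    intro γ b
    rw [abs_mul, abs_mul, abs_of_pos (Real.exp_pos _), nov_exp_factor hξ t γ b, hwdef, hvdef]
    ring
  have hbound : ∀ γ : Γ, |conv f g γ| * Real.exp (-(t * ξ γ)) ≤ ∑' b : Γ, w (γ * b⁻¹) * v b := by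
    intro γ
    have h1 : |conv f g γ| * Real.exp (-(t * ξ γ)) =
        |∑' b : Γ, f (γ * b⁻¹) * g b * Real.exp (-(t * ξ γ))| := by
      rw [tsum_mul_right, nov_inner_tsum hξ hfN hgN γ, abs_mul,
        abs_of_pos (Real.exp_pos _)]
    rw [h1]
    calc |∑' b : Γ, f (γ * b⁻¹) * g b * Real.exp (-(t * ξ γ))|
        ≤ ∑' b : Γ, |f (γ * b⁻¹) * g b * Real.exp (-(t * ξ γ))| := by
          have hs : Summable fun b : Γ => ‖f (γ * b⁻¹) * g b * Real.exp (-(t * ξ γ))‖ := by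
            simpa only [Real.norm_eq_abs, habs γ] using hfiber γ
          simpa only [Real.norm_eq_abs] using norm_tsum_le_tsum_norm hs
      _ = ∑' b : Γ, w (γ * b⁻¹) * v b := by
          exact tsum_congr fun b => habs γ b
  constructor
  · exact Summable.of_nonneg_of_le
      (fun γ => mul_nonneg (abs_nonneg _) (Real.exp_pos _).le) hbound hmarg
  · have hnf : Summable fun a : Γ => ‖f a * Real.exp (-(t * ξ a))‖ := by
      simpa only [Real.norm_eq_abs, abs_mul, abs_of_pos (Real.exp_pos _)] using hw
    have hng : Summable fun a : Γ => ‖g a * Real.exp (-(t * ξ a))‖ := by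
      simpa only [Real.norm_eq_abs, abs_mul, abs_of_pos (Real.exp_pos _)] using hv
    have HΦ : Summable fun p : Γ × Γ =>
        (f p.1 * Real.exp (-(t * ξ p.1))) * (g p.2 * Real.exp (-(t * ξ p.2))) :=
      summable_mul_of_summable_norm hnf hng
    have HF : Summable fun p : Γ × Γ =>
        (f (p.1 * p.2⁻¹) * Real.exp (-(t * ξ (p.1 * p.2⁻¹)))) *
          (g p.2 * Real.exp (-(t * ξ p.2))) :=
      ((mulShear Γ).symm.summable_iff (f := fun p : Γ × Γ =>
        (f p.1 * Real.exp (-(t * ξ p.1))) * (g p.2 * Real.exp (-(t * ξ p.2))))).mpr HΦ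
    have key : ∀ γ : Γ, (∑' b : Γ, (f (γ * b⁻¹) * Real.exp (-(t * ξ (γ * b⁻¹)))) *
        (g b * Real.exp (-(t * ξ b)))) = conv f g γ * Real.exp (-(t * ξ γ)) := by
      intro γ
      have : ∀ b : Γ, (f (γ * b⁻¹) * Real.exp (-(t * ξ (γ * b⁻¹)))) *
          (g b * Real.exp (-(t * ξ b))) = f (γ * b⁻¹) * g b * Real.exp (-(t * ξ γ)) := by
        intro b
        rw [nov_exp_factor hξ t γ b]
        ring
      rw [tsum_congr this, tsum_mul_right, nov_inner_tsum hξ hfN hgN γ]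
    calc (∑' γ : Γ, conv f g γ * Real.exp (-(t * ξ γ)))
        = ∑' γ : Γ, ∑' b : Γ, (f (γ * b⁻¹) * Real.exp (-(t * ξ (γ * b⁻¹)))) *
            (g b * Real.exp (-(t * ξ b))) := by
          exact tsum_congr fun γ => (key γ).symm
      _ = ∑' p : Γ × Γ, (f (p.1 * p.2⁻¹) * Real.exp (-(t * ξ (p.1 * p.2⁻¹)))) *
            (g p.2 * Real.exp (-(t * ξ p.2))) := (Summable.tsum_prod' HF HF.prod_factor).symm
      _ = ∑' p : Γ × Γ, (f p.1 * Real.exp (-(t * ξ p.1))) *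
            (g p.2 * Real.exp (-(t * ξ p.2))) :=
          (mulShear Γ).symm.tsum_eq (f := fun p : Γ × Γ =>
            (f p.1 * Real.exp (-(t * ξ p.1))) * (g p.2 * Real.exp (-(t * ξ p.2))))
      _ = (∑' γ : Γ, f γ * Real.exp (-(t * ξ γ))) * (∑' γ : Γ, g γ * Real.exp (-(t * ξ γ))) :=
          (tsum_mul_tsum_of_summable_norm hnf hng).symm

end Aux

/-- `Λ_{ξ,ρ}` is a subring of `Λ_ξ` and for each `t > ρ` the map `ev_t`
is a unit-preserving ring homomorphism `Λ_{ξ,ρ} → ℝ`. -/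
theorem novikov_rho_subring_and_ev_ringHom {Γ : Type*} [CommGroup Γ]
    (hfree : ∃ n : ℕ, Nonempty (Γ ≃* Multiplicative (Fin n → ℤ)))
    (ξ : Γ → ℝ) (hξ : ∀ a b : Γ, ξ (a * b) = ξ a + ξ b) (hinj : Function.Injective ξ)
    (ρ : ℝ) (hρ : 0 ≤ ρ) :
    (novOne ∈ NovSetRho ξ ρ) ∧
    (∀ f ∈ NovSetRho ξ ρ, ∀ g ∈ NovSetRho ξ ρ, f + g ∈ NovSetRho ξ ρ) ∧
    (∀ f ∈ NovSetRho ξ ρ, -f ∈ NovSetRho ξ ρ) ∧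
    (∀ f ∈ NovSetRho ξ ρ, ∀ g ∈ NovSetRho ξ ρ, conv f g ∈ NovSetRho ξ ρ) ∧
    (∀ t : ℝ, ρ < t →
      (novEv ξ t novOne = 1) ∧
      (∀ f ∈ NovSetRho ξ ρ, ∀ g ∈ NovSetRho ξ ρ,
        novEv ξ t (f + g) = novEv ξ t f + novEv ξ t g) ∧
      (∀ f ∈ NovSetRho ξ ρ, ∀ g ∈ NovSetRho ξ ρ,
        novEv ξ t (conv f g) = novEv ξ t f * novEv ξ t g)) := by
  have hξ1 : ξ 1 = 0 := by
    have := hξ 1 1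
    rw [one_mul] at this
    linarith
  have summ_of_mem : ∀ f ∈ NovSetRho ξ ρ, ∀ t : ℝ, ρ < t →
      Summable fun γ : Γ => f γ * Real.exp (-(t * ξ γ)) := by
    intro f hf t ht
    refine Summable.of_abs ?_
    simpa only [abs_mul, abs_of_pos (Real.exp_pos _)] using hf.2 t ht
  refine ⟨?_, ?_, ?_, ?_, ?_⟩
  · constructor
    · intro R
      refine Set.Finite.subset (Set.finite_singleton 1) ?_
      intro γ hγ
      by_contra h
      exact hγ.1 (if_neg (by simpa using h))
    · intro t ht
      refine summable_of_ne_finset_zero (s := {(1 : Γ)}) ?_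
      intro γ hγ
      simp only [Finset.mem_singleton] at hγ
      simp [novOne, hγ]
  · rintro f ⟨hfN, hfS⟩ g ⟨hgN, hgS⟩
    constructor
    · intro R
      refine Set.Finite.subset ((hfN R).union (hgN R)) ?_
      intro γ hγ
      rcases hγ with ⟨hne, hR⟩
      by_cases h : f γ = 0
      · right
        refine ⟨fun h' => hne ?_, hR⟩
        simp only [Pi.add_apply, h, h', add_zero]
      · exact Or.inl ⟨h, hR⟩
    · intro t ht
      refine Summable.of_nonneg_of_le
        (fun γ => mul_nonneg (abs_nonneg _) (Real.exp_pos _).le)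
        (fun γ => ?_) ((hfS t ht).add (hgS t ht))
      have : |(f + g) γ| ≤ |f γ| + |g γ| := abs_add_le _ _
      calc |(f + g) γ| * Real.exp (-(t * ξ γ))
          ≤ (|f γ| + |g γ|) * Real.exp (-(t * ξ γ)) :=
            mul_le_mul_of_nonneg_right this (Real.exp_pos _).le
        _ = |f γ| * Real.exp (-(t * ξ γ)) + |g γ| * Real.exp (-(t * ξ γ)) := by ring
  · rintro f ⟨hfN, hfS⟩
    constructor
    · intro R
      refine Set.Finite.subset (hfN R) ?_
      intro γ hγ
      exact ⟨by simpa using hγ.1, hγ.2⟩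
    · intro t ht
      simpa only [Pi.neg_apply, abs_neg] using hfS t ht
  · rintro f ⟨hfN, hfS⟩ g ⟨hgN, hgS⟩
    exact ⟨nov_conv_mem_novset hξ hfN hgN,
      fun t ht => (nov_mul_summable_and_ev hξ hfN hgN (hfS t ht) (hgS t ht)).1⟩
  · intro t ht
    refine ⟨?_, ?_, ?_⟩
    · rw [novEv, tsum_eq_single 1 (fun γ hγ => by simp [novOne, hγ])]
      simp [novOne, hξ1]
    · intro f hf g hg
      rw [novEv, novEv, novEv, ← Summable.tsum_add (summ_of_mem f hf t ht) (summ_of_mem g hg t ht)]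
      exact tsum_congr fun γ => by simp [add_mul]
    · intro f hf g hg
      exact (nov_mul_summable_and_ev hξ hf.1 hg.1 (hf.2 t ht) (hg.2 t ht)).2
end
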